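/- arXiv:2004.01510 — 3 statements merged into one kernel-verified Lean document; each statement's English description precedes it below -/
import Mathlib

section
/- Let m be a positive natural number, n ≤ m and i < 2m natural numbers, and let b₁, b₂ be real numbers with i/(2m) < b₁ < (i+1)/(2m) and i/(2m) < b₂ < (i+1)/(2m). Then for every natural number k ≤ m, |k - m·b₁| ≥ |n - m·b₁| if and only if |k - m·b₂| ≥ |n - m·b₂|. -/
lemma abs_iff_sq (a b : ℝ) : |a| ≤ |b| ↔ a ^ 2 ≤ b ^ 2 := by
  rw [← sq_abs a, ← sq_abs b,
    pow_le_pow_iff_left₀ (abs_nonneg a) (abs_nonneg b) two_ne_zero]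

theorem stmt_14 (m n i : ℕ) (hm : 0 < m) (hn : n ≤ m) (hi : i < 2 * m) (b₁ b₂ : ℝ)
    (hb₁ : (i : ℝ) / (2 * m) < b₁ ∧ b₁ < ((i : ℝ) + 1) / (2 * m))
    (hb₂ : (i : ℝ) / (2 * m) < b₂ ∧ b₂ < ((i : ℝ) + 1) / (2 * m))
    (k : ℕ) (hk : k ≤ m) :
    (|(k : ℝ) - m * b₁| ≥ |(n : ℝ) - m * b₁| ↔ |(k : ℝ) - m * b₂| ≥ |(n : ℝ) - m * b₂|) := by
  have h2m : (0:ℝ) < 2 * m := by positivity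
  have h1 : (i:ℝ) < 2 * m * b₁ := by
    have := hb₁.1; rw [div_lt_iff₀ h2m] at this; linarith
  have h1' : 2 * m * b₁ < (i:ℝ) + 1 := by
    have := hb₁.2; rw [lt_div_iff₀ h2m] at this; linarith
  have h2 : (i:ℝ) < 2 * m * b₂ := by
    have := hb₂.1; rw [div_lt_iff₀ h2m] at this; linarith
  have h2' : 2 * m * b₂ < (i:ℝ) + 1 := by
    have := hb₂.2; rw [lt_div_iff₀ h2m] at this; linarith
  rw [ge_iff_le, ge_iff_le, abs_iff_sq, abs_iff_sq]
  rcases le_or_gt (k + n) i with h | h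
  · have hle : (k:ℝ) + n ≤ i := by exact_mod_cast Nat.cast_le.mpr h
    constructor <;> intro H <;> nlinarith
  · have hge : (i:ℝ) + 1 ≤ (k:ℝ) + n := by
      have : i + 1 ≤ k + n := h
      exact_mod_cast Nat.cast_le.mpr this
    constructor <;> intro H <;> nlinarith
end

section
/- The supremum of the set { b ∈ [0,1] | P(3,2,b) ≥ 1/3 } equals (2/3)^(1/3), where P(3,2,b) = Σ_{k=0}^{3} [if |k - 3b| ≥ |2 - 3b| then C(3,k)·b^k·(1-b)^(3-k) else 0]. -/
noncomputable def P32 (b : ℝ) : ℝ :=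
  ∑ k ∈ Finset.range 4,
    (if |(k : ℝ) - 3 * b| ≥ |(2 : ℝ) - 3 * b| then
      ((Nat.choose 3 k : ℝ)) * b ^ k * (1 - b) ^ (3 - k) else 0)

lemma P32_eval {b : ℝ} (h1 : 5/6 < b) (h2 : b ≤ 1) : P32 b = 1 - b^3 := by
  have e2 : |(2:ℝ) - 3*b| = 3*b - 2 := by
    rw [abs_of_nonpos (by nlinarith)]; ring
  have c0 : |((0:ℕ):ℝ) - 3*b| ≥ |(2:ℝ) - 3*b| := by
    rw [e2, abs_of_nonpos (by push_cast; nlinarith)]; push_cast; linarith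
  have c1 : |((1:ℕ):ℝ) - 3*b| ≥ |(2:ℝ) - 3*b| := by
    rw [e2, abs_of_nonpos (by push_cast; nlinarith)]; push_cast; linarith
  have c2 : |((2:ℕ):ℝ) - 3*b| ≥ |(2:ℝ) - 3*b| := by push_cast; exact le_refl _
  have c3 : ¬ |((3:ℕ):ℝ) - 3*b| ≥ |(2:ℝ) - 3*b| := by
    rw [e2, abs_of_nonneg (by push_cast; nlinarith)]; push_cast; nlinarith
  unfold P32
  rw [Finset.sum_range_succ, Finset.sum_range_succ, Finset.sum_range_succ,
    Finset.sum_range_succ, Finset.sum_range_zero]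
  rw [if_pos c0, if_pos c1, if_pos c2, if_neg c3]
  norm_num
  ring

theorem stmt_18 :
    sSup {b : ℝ | b ∈ Set.Icc (0 : ℝ) 1 ∧ P32 b ≥ 1 / 3} = (2 / 3 : ℝ) ^ ((1 : ℝ) / 3) := by
  set c : ℝ := (2/3:ℝ)^((1:ℝ)/3) with hc
  have hc3 : c^3 = 2/3 := by
    rw [hc, ← Real.rpow_natCast ((2/3:ℝ)^((1:ℝ)/3)) 3, ← Real.rpow_mul (by norm_num)]
    norm_num
  have hc1 : c ≤ 1 := Real.rpow_le_one (by norm_num) (by norm_num) (by norm_num)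
  have hc0 : 0 ≤ c := Real.rpow_nonneg (by norm_num) _
  have hc56 : 5/6 < c := by nlinarith [sq_nonneg (c - 5/6), sq_nonneg c, sq_nonneg (c + 5/6)]
  apply IsGreatest.csSup_eq
  constructor
  · refine ⟨⟨hc0, hc1⟩, ?_⟩
    rw [ge_iff_le, P32_eval hc56 hc1, hc3]; norm_num
  · rintro b ⟨⟨hb0, hb1⟩, hb⟩
    by_contra h
    push_neg at h
    have h56 : 5/6 < b := lt_trans hc56 h
    rw [P32_eval h56 hb1] at hb
    have hlt : c^3 < b^3 := by
      apply pow_lt_pow_left₀ h hc0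
      norm_num
    rw [hc3] at hlt
    linarith
end

section
/- The infimum of the set { b ∈ [0,1] | P(3,2,b) ≥ 1/3 } equals 1/3, where P(3,2,b) = Σ_{k=0}^{3} [if |k - 3b| ≥ |2 - 3b| then C(3,k)·b^k·(1-b)^(3-k) else 0]. -/
theorem stmt_19 :
    sInf {b : ℝ | b ∈ Set.Icc (0 : ℝ) 1 ∧ P32 b ≥ 1 / 3} = 1 / 3 := by
  have hleast : IsLeast {b : ℝ | b ∈ Set.Icc (0 : ℝ) 1 ∧ P32 b ≥ 1 / 3} (1 / 3) := by
    constructor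
    · refine ⟨⟨by norm_num, by norm_num⟩, ?_⟩
      unfold P32
      rw [show (4 : ℕ) = 3 + 1 from rfl, Finset.sum_range_succ, Finset.sum_range_succ,
        Finset.sum_range_succ, Finset.sum_range_succ]
      norm_num [abs_of_nonneg, abs_of_nonpos]
    · rintro b ⟨⟨hb0, hb1⟩, hP⟩
      by_contra h
      push_neg at h
      have hP' : P32 b = 3 * b ^ 2 * (1 - b) + b ^ 3 := by
        unfold P32
        rw [show (4 : ℕ) = 3 + 1 from rfl, Finset.sum_range_succ, Finset.sum_range_succ,
          Finset.sum_range_succ, Finset.sum_range_succ]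
        push_cast
        rw [if_neg, if_neg, if_pos, if_pos]
        · norm_num [Nat.choose]
        · rw [abs_of_nonneg (by linarith), abs_of_nonneg (by linarith)]; linarith
        · rw [abs_of_nonneg (by linarith)]
        · rw [abs_of_nonneg (by linarith), abs_of_nonneg (by linarith)]; push_neg; linarith
        · rw [abs_of_nonpos (by linarith), abs_of_nonneg (by linarith)]; push_neg; linarith
      rw [hP'] at hP
      nlinarith [sq_nonneg b, sq_nonneg (b - 1/3)]
  exact hleast.csInf_eq
end
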